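/- Let p be prime, m ≥ 1, 0 ≤ w₁ < m, and γ₁ ∈ (0,1]. For the one-dimensional polynomial lattice quantity R^1_γ((x^{w₁}), x^m) := Σ_{h ∈ G_{p,m}\{0}, h x^{w₁} ≡ 0 mod x^m} γ₁ r_p(h), one has R^1_γ((x^{w₁}), x^m) = γ₁ p^{w₁ - m} w₁ (p²-1)/(3p). -/

import Mathlib

/-!
Since `X^m ∣ h X^{w₁}` iff `h = X^{m-w₁} g` with `deg g < w₁`, and multiplying by `X^k` divides
`r_p` by `p^k`, the sum is `γ₁ p^{w₁-m} ∑_{g ∈ G_{p,w₁}} r_p(g)`. Splitting off the top coefficient,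
the polynomials of exact degree `a` contribute `p^a · p^{-(a+1)} ∑_{c ∈ 𝔽_p^×} csc²(π c / p)`,
which is `(p² - 1)/(3p)` by the classical identity `∑_{k=1}^{n-1} csc²(π k / n) = (n² - 1)/3`.
That identity is Parseval's identity for the discrete Fourier transform of `a ↦ a` on `ℤ/n`,
whose coefficient at `k ≠ 0` is `n / (ζ^k - 1)` with `ζ = e^{2πi/n}`.
-/

open Polynomial Finset
open scoped Classical

/-- The set `G_{p,m}` of polynomials over `F_p` of degree `< m`. -/
noncomputable def Gset (p m : ℕ) [NeZero p] : Finset (Polynomial (ZMod p)) :=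
  (Finset.univ : Finset (Fin m → ZMod p)).image
    (fun c => ∑ i : Fin m, Polynomial.C (c i) * Polynomial.X ^ (i : ℕ))

/-- `r_p(h) = 1/(p^{a+1} sin²(π h_a/p))` for `h` of degree `a` with leading coefficient `h_a`. -/
noncomputable def rp (p : ℕ) (h : Polynomial (ZMod p)) : ℝ :=
  1 / ((p : ℝ) ^ (h.natDegree + 1) * Real.sin (Real.pi * (h.leadingCoeff.val : ℝ) / p) ^ 2)

section
open Complex ComplexConjugate
open scoped Real

theorem sub_one_mul_sum_range_mul_pow {R : Type*} [CommRing R] (z : R) (n : ℕ) :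
    (z - 1) * ∑ a ∈ range n, (a : R) * z ^ a = n * z ^ n - z * ∑ a ∈ range n, z ^ a := by
  induction n with
  | zero => simp
  | succ n ih => rw [sum_range_succ, sum_range_succ, mul_add, ih]; push_cast; ring

theorem IsPrimitiveRoot.sum_range_pow_mul_inv_pow {K : Type*} [Field K] {ζ : K} {n a b : ℕ}
    (hζ : IsPrimitiveRoot ζ n) (ha : a < n) (hb : b < n) :
    ∑ k ∈ range n, (ζ ^ a * (ζ ^ b)⁻¹) ^ k = if a = b then (n : K) else 0 := by
  have hζb : ζ ^ b ≠ 0 := pow_ne_zero _ (hζ.ne_zero (by omega))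
  split_ifs with hab
  · simp [hab, hζb]
  · have hne : ζ ^ a * (ζ ^ b)⁻¹ ≠ 1 := by
      rw [Ne, mul_inv_eq_one₀ hζb]
      exact fun h => hab (hζ.pow_inj ha hb h)
    rw [geom_sum_eq hne, mul_pow, inv_pow, ← pow_mul, ← pow_mul, pow_mul', pow_mul' ζ b,
      hζ.pow_eq_one, one_pow, one_pow, inv_one, mul_one, sub_self, zero_div]

theorem IsPrimitiveRoot.sum_normSq_sum_mul_pow {ζ : ℂ} {n : ℕ} (hζ : IsPrimitiveRoot ζ n)
    (f : ℕ → ℂ) :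
    ∑ k ∈ range n, normSq (∑ a ∈ range n, f a * (ζ ^ k) ^ a)
      = n * ∑ a ∈ range n, normSq (f a) := by
  rcases Nat.eq_zero_or_pos n with rfl | hn
  · simp
  have hζ1 : ‖ζ‖ = 1 := hζ.norm'_eq_one hn.ne'
  apply ofReal_injective
  push_cast
  simp_rw [← mul_conj, map_sum, sum_mul_sum]
  calc ∑ k ∈ range n, ∑ a ∈ range n, ∑ b ∈ range n, f a * (ζ ^ k) ^ a * conj (f b * (ζ ^ k) ^ b)
      = ∑ a ∈ range n, ∑ b ∈ range n,
          f a * conj (f b) * ∑ k ∈ range n, (ζ ^ a * (ζ ^ b)⁻¹) ^ k := by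
        rw [sum_comm]; refine sum_congr rfl fun a _ => ?_
        rw [sum_comm]; refine sum_congr rfl fun b _ => ?_
        rw [mul_sum]; refine sum_congr rfl fun k _ => ?_
        rw [map_mul, map_pow, map_pow, ← inv_eq_conj hζ1]
        ring
    _ = ∑ a ∈ range n, f a * conj (f a) * n := by
        refine sum_congr rfl fun a ha => ?_
        rw [sum_congr rfl fun b hb => by
          rw [hζ.sum_range_pow_mul_inv_pow (mem_range.1 ha) (mem_range.1 hb), mul_ite, mul_zero]]
        rw [sum_ite_eq, if_pos ha]
    _ = n * ∑ a ∈ range n, f a * conj (f a) := by rw [mul_sum]; simp_rw [mul_comm (n : ℂ)]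

theorem normSq_exp_two_pi_I_div_pow_sub_one (n k : ℕ) :
    normSq (exp (2 * π * I / n) ^ k - 1) = 4 * Real.sin (π * k / n) ^ 2 := by
  rw [← exp_nat_mul, normSq_eq_norm_sq,
    show (k : ℂ) * (2 * π * I / n) = I * ((2 * π * k / n : ℝ) : ℂ) by push_cast; ring,
    norm_exp_I_mul_ofReal_sub_one, norm_mul, Real.norm_eq_abs, Real.norm_eq_abs, mul_pow, sq_abs,
    sq_abs]
  ring_nf

theorem sum_Ioo_one_div_sin_sq {n : ℕ} (hn : n ≠ 0) :
    ∑ k ∈ Ioo 0 n, 1 / Real.sin (π * k / n) ^ 2 = ((n : ℝ) ^ 2 - 1) / 3 := by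
  set ζ := exp (2 * π * I / n)
  have hζ : IsPrimitiveRoot ζ n := isPrimitiveRoot_exp n hn
  have hterm : ∀ k ∈ Ioo 0 n, normSq (∑ a ∈ range n, (a : ℂ) * (ζ ^ k) ^ a)
      = n ^ 2 / 4 * (1 / Real.sin (π * k / n) ^ 2) := by
    intro k hk
    obtain ⟨hk0, hkn⟩ := mem_Ioo.1 hk
    have hne : ζ ^ k ≠ 1 := hζ.pow_ne_one_of_pos_of_lt hk0.ne' hkn
    have hpow : (ζ ^ k) ^ n = 1 := by rw [← pow_mul, mul_comm, pow_mul, hζ.pow_eq_one, one_pow]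
    have hgeom : ∑ a ∈ range n, (ζ ^ k) ^ a = 0 := by
      rw [geom_sum_eq hne, hpow, sub_self, zero_div]
    have h := sub_one_mul_sum_range_mul_pow (ζ ^ k) n
    rw [hpow, hgeom, mul_zero, sub_zero, mul_one, mul_comm] at h
    rw [eq_div_of_mul_eq (sub_ne_zero.2 hne) h, normSq_div, normSq_natCast,
      normSq_exp_two_pi_I_div_pow_sub_one]
    ring
  have hparseval := hζ.sum_normSq_sum_mul_pow (fun a => (a : ℂ))
  have hsplit (f : ℕ → ℝ) : ∑ k ∈ range n, f k = f 0 + ∑ k ∈ Ioo 0 n, f k := by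
    rw [range_eq_Ico, ← Ioo_insert_left (Nat.pos_of_ne_zero hn), sum_insert (by simp)]
  rw [hsplit fun k => normSq (∑ a ∈ range n, (a : ℂ) * (ζ ^ k) ^ a), sum_congr rfl hterm,
    ← mul_sum] at hparseval
  simp only [pow_zero, one_pow, mul_one, normSq_natCast] at hparseval
  have hsum : ∀ m : ℕ, ∑ a ∈ range m, (a : ℝ) = m * (m - 1) / 2 := by
    intro m; induction m with
    | zero => simp
    | succ m ih => rw [sum_range_succ, ih]; push_cast; ring
  have hsum_sq : ∀ m : ℕ, ∑ a ∈ range m, (a : ℝ) * a = m * (m - 1) * (2 * m - 1) / 6 := by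
    intro m; induction m with
    | zero => simp
    | succ m ih => rw [sum_range_succ, ih]; push_cast; ring
  rw [← Nat.cast_sum, normSq_natCast] at hparseval
  push_cast at hparseval
  rw [hsum, hsum_sq] at hparseval
  have hn2 : (n : ℝ) ^ 2 / 4 ≠ 0 := by positivity
  apply mul_left_cancel₀ hn2
  linear_combination hparseval

end

theorem ZMod.sum_erase_zero_one_div_sin_sq (n : ℕ) [NeZero n] :
    ∑ a ∈ univ.erase (0 : ZMod n), 1 / Real.sin (Real.pi * a.val / n) ^ 2
      = ((n : ℝ) ^ 2 - 1) / 3 := by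
  rw [← sum_Ioo_one_div_sin_sq (NeZero.ne n)]
  refine sum_nbij' ZMod.val Nat.cast (fun a ha => ?_) (fun k hk => ?_)
    (fun a _ => ZMod.natCast_zmod_val a) (fun k hk => ZMod.val_cast_of_lt (mem_Ioo.1 hk).2)
    fun _ _ => rfl
  · simp only [mem_erase, ne_eq, mem_univ, and_true] at ha
    exact mem_Ioo.2 ⟨Nat.pos_of_ne_zero ((ZMod.val_ne_zero a).2 ha), ZMod.val_lt a⟩
  · obtain ⟨hk0, hkn⟩ := mem_Ioo.1 hk
    refine mem_erase.2 ⟨fun h => ?_, mem_univ _⟩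
    have := ZMod.val_cast_of_lt hkn
    rw [h, ZMod.val_zero] at this
    omega

theorem sum_fin_C_mul_X_pow_injective {R : Type*} [Semiring R] (m : ℕ) :
    Function.Injective fun c : Fin m → R => ∑ i : Fin m, C (c i) * X ^ (i : ℕ) := by
  intro c d h
  funext i
  simpa [finsetSum_coeff, coeff_C_mul, coeff_X_pow, Fin.val_inj] using congrArg (coeff · i) h

theorem X_pow_dvd_mul_X_pow_iff {R : Type*} [CommRing R] [IsDomain R] {k w : ℕ} {h : R[X]} :
    X ^ (k + w) ∣ h * X ^ w ↔ X ^ k ∣ h := by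
  rw [pow_add, mul_dvd_mul_iff_right (pow_ne_zero w X_ne_zero)]

-- Holds only because `1 / 0 = 0`; it lets sums of `rp` run over all of `Gset`.
theorem rp_zero (p : ℕ) : rp p 0 = 0 := by simp [rp]

theorem rp_add_C_mul_X_pow {p w : ℕ} {g : (ZMod p)[X]} (hg : g.degree < w) {a : ZMod p}
    (ha : a ≠ 0) :
    rp p (g + C a * X ^ w) = 1 / ((p : ℝ) ^ (w + 1) * Real.sin (Real.pi * a.val / p) ^ 2) := by
  have hlt : g.degree < (C a * X ^ w).degree := by rwa [degree_C_mul_X_pow w ha]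
  rw [rp, natDegree_add_eq_right_of_degree_lt hlt, leadingCoeff_add_of_degree_lt hlt,
    natDegree_C_mul_X_pow w a ha, leadingCoeff_C_mul_X_pow]

section
variable {p : ℕ} [NeZero p]

theorem mem_Gset {m : ℕ} {h : (ZMod p)[X]} : h ∈ Gset p m ↔ h.degree < m := by
  refine ⟨fun hh => ?_, fun hh => ?_⟩
  · obtain ⟨c, -, rfl⟩ := mem_image.1 hh
    exact degree_sum_fin_lt c
  · refine mem_image.2 ⟨fun i => h.coeff i, mem_univ _, ?_⟩
    rcases eq_or_ne h 0 with rfl | h0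
    · simp
    rw [Fin.sum_univ_eq_sum_range (fun i => C (h.coeff i) * X ^ i)]
    exact (h.as_sum_range_C_mul_X_pow' ((natDegree_lt_iff_degree_lt h0).2 hh)).symm

theorem card_Gset (m : ℕ) : #(Gset p m) = p ^ m := by
  rw [Gset, card_image_of_injective _ (sum_fin_C_mul_X_pow_injective m)]
  simp [ZMod.card]

theorem sum_Gset_succ {M : Type*} [AddCommMonoid M] (f : (ZMod p)[X] → M) (w : ℕ) :
    ∑ h ∈ Gset p (w + 1), f h = ∑ g ∈ Gset p w, ∑ a : ZMod p, f (g + C a * X ^ w) := by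
  rw [Gset, Gset, sum_image (sum_fin_C_mul_X_pow_injective _).injOn,
    sum_image (sum_fin_C_mul_X_pow_injective _).injOn,
    ← (Fin.snocEquiv fun _ => ZMod p).sum_comp, Fintype.sum_prod_type_right]
  simp [Fin.sum_univ_castSucc]

theorem sum_rp_add_C_mul_X_pow {w : ℕ} {g : (ZMod p)[X]} (hg : g.degree < w) :
    ∑ a : ZMod p, rp p (g + C a * X ^ w)
      = rp p g + ((p : ℝ) ^ 2 - 1) / 3 / (p : ℝ) ^ (w + 1) := by
  rw [← add_sum_erase _ _ (mem_univ 0), C_0, zero_mul, add_zero,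
    sum_congr rfl fun a ha => rp_add_C_mul_X_pow hg (ne_of_mem_erase ha)]
  simp_rw [div_mul_eq_div_div_swap]
  rw [← sum_div, ZMod.sum_erase_zero_one_div_sin_sq]

theorem sum_Gset_rp (w : ℕ) : ∑ h ∈ Gset p w, rp p h = w * ((p : ℝ) ^ 2 - 1) / (3 * p) := by
  induction w with
  | zero => simp [Gset, rp_zero]
  | succ w ih =>
    rw [sum_Gset_succ, sum_congr rfl fun g hg => sum_rp_add_C_mul_X_pow (mem_Gset.1 hg),
      sum_add_distrib, ih, sum_const, card_Gset, nsmul_eq_mul]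
    have hp : (p : ℝ) ≠ 0 := NeZero.ne _
    push_cast
    field_simp
    ring

end

section
variable {p : ℕ} [Fact p.Prime]

theorem rp_X_pow_mul (k : ℕ) (g : (ZMod p)[X]) : rp p (X ^ k * g) = rp p g / (p : ℝ) ^ k := by
  rcases eq_or_ne g 0 with rfl | hg
  · simp [rp_zero]
  rw [rp, rp, natDegree_X_pow_mul (n := k) hg, leadingCoeff_monic_mul (monic_X_pow k), div_div,
    add_right_comm, pow_add, mul_right_comm]

theorem X_pow_mul_mem_Gset_iff {k w : ℕ} {g : (ZMod p)[X]} :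
    X ^ k * g ∈ Gset p (k + w) ↔ g ∈ Gset p w := by
  rw [mem_Gset, mem_Gset, degree_mul, degree_X_pow, Nat.cast_add]
  exact WithBot.add_lt_add_iff_left (WithBot.coe_ne_bot)

theorem Gset_filter_X_pow_dvd_eq_image (k w : ℕ) :
    (Gset p (k + w)).filter (fun h => X ^ (k + w) ∣ h * X ^ w)
      = (Gset p w).image (X ^ k * ·) := by
  ext h
  simp only [mem_filter, mem_image, X_pow_dvd_mul_X_pow_iff]
  constructor
  · rintro ⟨hh, g, rfl⟩
    exact ⟨g, X_pow_mul_mem_Gset_iff.1 hh, rfl⟩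
  · rintro ⟨g, hg, rfl⟩
    exact ⟨X_pow_mul_mem_Gset_iff.2 hg, dvd_mul_right _ _⟩

end

theorem R_one_dim_general (p : ℕ) [Fact p.Prime] (m w₁ : ℕ) (hw : w₁ < m) (γ₁ : ℝ) :
    ∑ h ∈ (Gset p m).filter
        (fun h => h ≠ 0 ∧ (Polynomial.X : Polynomial (ZMod p)) ^ m ∣ h * Polynomial.X ^ w₁),
      γ₁ * rp p h
    = γ₁ * (p : ℝ) ^ ((w₁ : ℤ) - (m : ℤ)) * (w₁ : ℝ) * ((p : ℝ) ^ 2 - 1) / (3 * p) := by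
  obtain ⟨k, rfl⟩ : ∃ k, m = k + w₁ := ⟨m - w₁, by omega⟩
  have hp : (p : ℝ) ≠ 0 := NeZero.ne _
  have hzero :
      ∑ h ∈ (Gset p (k + w₁)).filter (fun h => h ≠ 0 ∧ X ^ (k + w₁) ∣ h * X ^ w₁), rp p h
        = ∑ h ∈ (Gset p (k + w₁)).filter (fun h => X ^ (k + w₁) ∣ h * X ^ w₁), rp p h :=
    sum_subset (monotone_filter_right _ fun _ _ hh => hh.2) fun h hh hne => by
      obtain rfl : h = 0 := by
        by_contra h0
        exact hne (mem_filter.2 ⟨(mem_filter.1 hh).1, h0, (mem_filter.1 hh).2⟩)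
      exact rp_zero p
  rw [← mul_sum, hzero, Gset_filter_X_pow_dvd_eq_image,
    sum_image (mul_right_injective₀ (pow_ne_zero k X_ne_zero)).injOn]
  simp_rw [rp_X_pow_mul]
  rw [← sum_div, sum_Gset_rp, zpow_sub₀ hp, zpow_natCast, zpow_natCast, pow_add]
  field_simp

theorem R_one_dim (p : ℕ) [Fact p.Prime] (m w₁ : ℕ) (hm : 1 ≤ m) (hw : w₁ < m)
    (γ₁ : ℝ) (hγ : γ₁ ∈ Set.Ioc (0 : ℝ) 1) :
    ∑ h ∈ (Gset p m).filter
        (fun h => h ≠ 0 ∧ (Polynomial.X : Polynomial (ZMod p)) ^ m ∣ h * Polynomial.X ^ w₁),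
      γ₁ * rp p h
    = γ₁ * (p : ℝ) ^ ((w₁ : ℤ) - (m : ℤ)) * (w₁ : ℝ) * ((p : ℝ) ^ 2 - 1) / (3 * p) :=
  R_one_dim_general p m w₁ hw γ₁
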